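/- arXiv:2505.07023 — 2 statements merged into one kernel-verified Lean document; each statement's English description precedes it below -/
import Mathlib

section
/- If for each t = 1,...,T the Wasserstein-1 distance between the marginal distributions P_t(X_t) and P_{t-1}(X_{t-1}) is at most ε_t (with cost c_x), and the conditional label distributions satisfy W(P_t(Y|X=x_t), P_{t-1}(Y|X=x_{t-1})) ≤ L_t · c_x(x_t, x_{t-1}) for all x_t, x_{t-1}, then the Wasserstein-1 distance between the joint distributions, with respect to the separable cost c((x,y),(x',y')) = c_x(x,x') + c_y(y,y'), satisfies W(P_t(X_t,Y_t), P_{t-1}(X_{t-1},Y_{t-1})) ≤ (1 + L_t)·ε_t. -/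
open BigOperators Finset

/-- A probability vector on a finite type. -/
def IsProbVec {Z : Type*} [Fintype Z] (p : Z → ℝ) : Prop :=
  (∀ z, 0 ≤ p z) ∧ ∑ z, p z = 1

/-- A coupling of two probability vectors on finite types. -/
def IsCoupling {Z W : Type*} [Fintype Z] [Fintype W]
    (γ : Z → W → ℝ) (p : Z → ℝ) (q : W → ℝ) : Prop :=
  (∀ z w, 0 ≤ γ z w) ∧ (∀ z, ∑ w, γ z w = p z) ∧ (∀ w, ∑ z, γ z w = q w)

/-- Wasserstein-1 distance with cost `c` between probability vectors on a finite type. -/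
noncomputable def W1 {Z : Type*} [Fintype Z]
    (c : Z → Z → ℝ) (p q : Z → ℝ) : ℝ :=
  sInf { r | ∃ γ, IsCoupling γ p q ∧ r = ∑ z, ∑ w, c z w * γ z w }

/-- The `X`-marginal of a joint distribution on `X × Y`. -/
noncomputable def margX {X Y : Type*} [Fintype X] [Fintype Y]
    (μ : X × Y → ℝ) (x : X) : ℝ := ∑ y, μ (x, y)

/-- The conditional label distribution of a joint distribution on `X × Y`. -/
noncomputable def condY {X Y : Type*} [Fintype X] [Fintype Y]
    (μ : X × Y → ℝ) (x : X) (y : Y) : ℝ := μ (x, y) / margX μ x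

/-!
Glue a coupling `γ` of the input marginals with couplings `g x x'` of the conditional label
distributions into the coupling `γ x x' * g x x' y y'` of the joints. Its cost is
`∑ γ x x' * (cx x x' + transportCost cy (g x x'))`; choosing all couplings optimal (they exist:
the couplings of two finite probability vectors form a compact polytope) and bounding the
conditional costs by `L * cx x x'` gives `(1 + L) * W1 cx (margX μ) (margX ν)`.
-/

noncomputable def transportCost {Z W : Type*} [Fintype Z] [Fintype W]
    (c : Z → W → ℝ) (γ : Z → W → ℝ) : ℝ :=
  ∑ z, ∑ w, c z w * γ z w

section Coupling

variable {Z W : Type*} [Fintype Z] [Fintype W] {p : Z → ℝ} {q : W → ℝ}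

theorem isCoupling_mul (hp : IsProbVec p) (hq : IsProbVec q) :
    IsCoupling (fun z w => p z * q w) p q := by
  refine ⟨fun z w => mul_nonneg (hp.1 z) (hq.1 w), fun z => ?_, fun w => ?_⟩
  · rw [← mul_sum, hq.2, mul_one]
  · rw [← sum_mul, hp.2, one_mul]

theorem IsCoupling.sum_sum_eq_one {γ : Z → W → ℝ} (hγ : IsCoupling γ p q)
    (hp : IsProbVec p) :
    ∑ z, ∑ w, γ z w = 1 := by
  simp only [hγ.2.1, hp.2]

theorem isCompact_setOf_isCoupling (p : Z → ℝ) (q : W → ℝ) :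
    IsCompact {γ : Z → W → ℝ | IsCoupling γ p q} := by
  have hclosed : IsClosed {γ : Z → W → ℝ | IsCoupling γ p q} := by
    simp only [IsCoupling, Set.ofPred_and, Set.ofPred_forall]
    refine (isClosed_iInter fun z => isClosed_iInter fun w => ?_).inter
      ((isClosed_iInter fun z => ?_).inter (isClosed_iInter fun w => ?_))
    · exact isClosed_le continuous_const (by fun_prop)
    · exact isClosed_eq (by fun_prop) continuous_const
    · exact isClosed_eq (by fun_prop) continuous_const
  refine (isCompact_univ_pi fun z => isCompact_univ_pi fun _ => isCompact_Icc
    (a := 0) (b := p z)).of_isClosed_subset hclosed fun γ hγ => ?_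
  simp only [Set.mem_pi, Set.mem_univ, forall_const, Set.mem_Icc]
  intro z w
  refine ⟨hγ.1 z w, ?_⟩
  rw [← hγ.2.1 z]
  exact single_le_sum (fun w _ => hγ.1 z w) (mem_univ w)

end Coupling

section Wasserstein

variable {Z : Type*} [Fintype Z] (c : Z → Z → ℝ) {p q : Z → ℝ}

theorem W1_eq_sInf_image :
    W1 c p q = sInf (transportCost c '' {γ | IsCoupling γ p q}) := by
  unfold W1 transportCost
  congr 1
  ext r
  simp only [Set.mem_ofPred_eq, Set.mem_image]
  exact exists_congr fun γ => and_congr_right fun _ => eq_comm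

theorem W1_le_transportCost {γ : Z → Z → ℝ} (hγ : IsCoupling γ p q) :
    W1 c p q ≤ transportCost c γ := by
  rw [W1_eq_sInf_image]
  exact csInf_le ((isCompact_setOf_isCoupling p q).image (by unfold transportCost; fun_prop)
    |>.bddBelow) ⟨γ, hγ, rfl⟩

theorem exists_isCoupling_W1_eq (hp : IsProbVec p) (hq : IsProbVec q) :
    ∃ γ, IsCoupling γ p q ∧ W1 c p q = transportCost c γ := by
  obtain ⟨γ, hγ, hmin⟩ := (isCompact_setOf_isCoupling p q).exists_isMinOn
    ⟨_, isCoupling_mul hp hq⟩ (f := transportCost c) (by unfold transportCost; fun_prop)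
  refine ⟨γ, hγ, (W1_le_transportCost c hγ).antisymm ?_⟩
  rw [W1_eq_sInf_image]
  exact le_csInf ⟨_, γ, hγ, rfl⟩ (Set.forall_mem_image.2 hmin)

end Wasserstein

section Gluing

variable {X Y : Type*} [Fintype X] [Fintype Y] {μ : X × Y → ℝ}

theorem isProbVec_margX (hμ : IsProbVec μ) : IsProbVec (margX μ) :=
  ⟨fun _ => sum_nonneg fun _ _ => hμ.1 _, by rw [← hμ.2, Fintype.sum_prod_type]; rfl⟩

theorem isProbVec_condY (hμ : IsProbVec μ) {x : X} (hx : 0 < margX μ x) :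
    IsProbVec (condY μ x) :=
  ⟨fun _ => div_nonneg (hμ.1 _) hx.le, by
    simp only [condY, ← sum_div]; exact div_self hx.ne'⟩

theorem margX_mul_condY {x : X} (hx : margX μ x ≠ 0) (y : Y) :
    margX μ x * condY μ x y = μ (x, y) :=
  mul_div_cancel₀ _ hx

def glue (γ : X → X → ℝ) (g : X → X → Y → Y → ℝ) : X × Y → X × Y → ℝ :=
  fun a b => γ a.1 b.1 * g a.1 b.1 a.2 b.2

theorem isCoupling_glue {ν : X × Y → ℝ} (hμpos : ∀ x, 0 < margX μ x)
    (hνpos : ∀ x, 0 < margX ν x) {γ : X → X → ℝ} {g : X → X → Y → Y → ℝ}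
    (hγ : IsCoupling γ (margX μ) (margX ν))
    (hg : ∀ x x', IsCoupling (g x x') (condY μ x) (condY ν x')) :
    IsCoupling (glue γ g) μ ν := by
  refine ⟨fun a b => mul_nonneg (hγ.1 _ _) ((hg _ _).1 _ _), ?_, ?_⟩
  · rintro ⟨x, y⟩
    simp only [glue, Fintype.sum_prod_type, ← mul_sum, (hg _ _).2.1, ← sum_mul, hγ.2.1]
    exact margX_mul_condY (hμpos x).ne' y
  · rintro ⟨x', y'⟩
    simp only [glue, Fintype.sum_prod_type, ← mul_sum, (hg _ _).2.2, ← sum_mul, hγ.2.2]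
    exact margX_mul_condY (hνpos x').ne' y'

theorem transportCost_glue (cx : X → X → ℝ) (cy : Y → Y → ℝ) (γ : X → X → ℝ)
    {g : X → X → Y → Y → ℝ} (hg : ∀ x x', ∑ y, ∑ y', g x x' y y' = 1) :
    transportCost (fun a b : X × Y => cx a.1 b.1 + cy a.2 b.2) (glue γ g) =
      ∑ x, ∑ x', γ x x' * (cx x x' + transportCost cy (g x x')) := by
  simp only [transportCost, glue, Fintype.sum_prod_type]
  refine sum_congr rfl fun x _ => ?_
  rw [sum_comm]
  refine sum_congr rfl fun x' _ => ?_
  have hmass := hg x x'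
  simp only [add_mul, sum_add_distrib, ← mul_sum] at hmass ⊢
  rw [hmass, mul_add, mul_sum]
  simp only [mul_sum, mul_left_comm (γ x x')]
  ring

end Gluing

theorem gradually_lipschitz_smooth_implies_gradual_general
    {X Y : Type*} [Fintype X] [Fintype Y]
    (cx : X → X → ℝ) (cy : Y → Y → ℝ)
    (μ ν : X × Y → ℝ) (hμ : IsProbVec μ) (hν : IsProbVec ν)
    (hμpos : ∀ x, 0 < margX μ x) (hνpos : ∀ x, 0 < margX ν x)
    (L ε : ℝ) (hL : 0 < L)
    (hW : W1 cx (margX μ) (margX ν) ≤ ε)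
    (hLip : ∀ x x', W1 cy (condY μ x) (condY ν x') ≤ L * cx x x') :
    W1 (fun p q : X × Y => cx p.1 q.1 + cy p.2 q.2) μ ν ≤ (1 + L) * ε := by
  obtain ⟨γ, hγ, hγW⟩ :=
    exists_isCoupling_W1_eq cx (isProbVec_margX hμ) (isProbVec_margX hν)
  choose g hg hgW using fun x x' =>
    exists_isCoupling_W1_eq cy (isProbVec_condY hμ (hμpos x)) (isProbVec_condY hν (hνpos x'))
  have hmass x x' : ∑ y, ∑ y', g x x' y y' = 1 :=
    (hg x x').sum_sum_eq_one (isProbVec_condY hμ (hμpos x))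
  calc W1 (fun p q : X × Y => cx p.1 q.1 + cy p.2 q.2) μ ν
      ≤ transportCost (fun p q : X × Y => cx p.1 q.1 + cy p.2 q.2) (glue γ g) :=
        W1_le_transportCost _ (isCoupling_glue hμpos hνpos hγ hg)
    _ = ∑ x, ∑ x', γ x x' * (cx x x' + W1 cy (condY μ x) (condY ν x')) := by
        simp only [transportCost_glue cx cy γ hmass, hgW]
    _ ≤ ∑ x, ∑ x', γ x x' * (cx x x' + L * cx x x') := by
        gcongr with x _ x' _
        · exact hγ.1 x x'
        · exact hLip x x'
    _ = (1 + L) * W1 cx (margX μ) (margX ν) := by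
        simp only [hγW, transportCost, mul_sum]
        exact sum_congr rfl fun x _ => sum_congr rfl fun x' _ => by ring
    _ ≤ (1 + L) * ε := mul_le_mul_of_nonneg_left hW (by linarith)

/-- Gradual Lipschitz smoothness implies gradualness of the joint shift:
if the Wasserstein distance of the input marginals is at most `ε` and the conditional
label distributions are `L`-Lipschitz in the input cost, then the Wasserstein distance
of the joints (for the separable cost) is at most `(1 + L) * ε`. Here `μ` plays the
role of `P_t` and `ν` the role of `P_{t-1}`. -/
theorem gradually_lipschitz_smooth_implies_gradual
    {X Y : Type*} [Fintype X] [Fintype Y]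
    (cx : X → X → ℝ) (cy : Y → Y → ℝ)
    (hcx : ∀ x x', 0 ≤ cx x x') (hcy : ∀ y y', 0 ≤ cy y y')
    (μ ν : X × Y → ℝ) (hμ : IsProbVec μ) (hν : IsProbVec ν)
    (hμpos : ∀ x, 0 < margX μ x) (hνpos : ∀ x, 0 < margX ν x)
    (L ε : ℝ) (hL : 0 < L)
    (hW : W1 cx (margX μ) (margX ν) ≤ ε)
    (hLip : ∀ x x', W1 cy (condY μ x) (condY ν x') ≤ L * cx x x') :
    W1 (fun p q : X × Y => cx p.1 q.1 + cy p.2 q.2) μ ν ≤ (1 + L) * ε :=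
  gradually_lipschitz_smooth_implies_gradual_general cx cy μ ν hμ hν hμpos hνpos L ε hL hW hLip
end

section
/- Suppose μ and ν are probability measures on a product space X × Y with marginals μ_X, ν_X on X. Let π_x be the optimal coupling of μ_X and ν_X, and for each pair (x, x') couple the conditionals μ(·|x) and ν(·|x'). Then the Wasserstein distance between μ and ν with separable cost c_x + c_y is bounded by W_{c_x}(μ_X, ν_X) + E_{(x,x')∼π_x}[ W_{c_y}(μ(·|X=x), ν(·|X=x')) ]. -/
open BigOperators Finset

lemma prod_coupling {Z W : Type*} [Fintype Z] [Fintype W] {p : Z → ℝ} {q : W → ℝ}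
    (hp : IsProbVec p) (hq : IsProbVec q) :
    IsCoupling (fun z w => p z * q w) p q := by
  refine ⟨fun z w => mul_nonneg (hp.1 z) (hq.1 w), fun z => ?_, fun w => ?_⟩
  · rw [← Finset.mul_sum, hq.2, mul_one]
  · rw [← Finset.sum_mul, hp.2, one_mul]

lemma W1_bdd {Z : Type*} [Fintype Z] {c : Z → Z → ℝ} (hc : ∀ z w, 0 ≤ c z w)
    (p q : Z → ℝ) :
    BddBelow { r | ∃ γ, IsCoupling γ p q ∧ r = ∑ z, ∑ w, c z w * γ z w } := by
  refine ⟨0, fun r hr => ?_⟩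
  obtain ⟨γ, hγ, rfl⟩ := hr
  exact Finset.sum_nonneg fun z _ => Finset.sum_nonneg fun w _ =>
    mul_nonneg (hc z w) (hγ.1 z w)

lemma W1_le_cost {Z : Type*} [Fintype Z] {c : Z → Z → ℝ} (hc : ∀ z w, 0 ≤ c z w)
    {p q : Z → ℝ} {γ : Z → Z → ℝ} (hγ : IsCoupling γ p q) :
    W1 c p q ≤ ∑ z, ∑ w, c z w * γ z w :=
  csInf_le (W1_bdd hc p q) ⟨γ, hγ, rfl⟩

lemma exists_coupling_lt {Z : Type*} [Fintype Z] {c : Z → Z → ℝ} (hc : ∀ z w, 0 ≤ c z w)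
    {p q : Z → ℝ} (hp : IsProbVec p) (hq : IsProbVec q) {ε : ℝ} (hε : 0 < ε) :
    ∃ γ, IsCoupling γ p q ∧ ∑ z, ∑ w, c z w * γ z w < W1 c p q + ε := by
  have hne : { r | ∃ γ, IsCoupling γ p q ∧ r = ∑ z, ∑ w, c z w * γ z w }.Nonempty :=
    ⟨_, ⟨fun z w => p z * q w, prod_coupling hp hq, rfl⟩⟩
  have hlt : W1 c p q < W1 c p q + ε := lt_add_of_pos_right _ hε
  obtain ⟨r, hr, hrlt⟩ := (csInf_lt_iff (W1_bdd hc p q) hne).mp hlt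
  obtain ⟨γ, hγ, rfl⟩ := hr
  exact ⟨γ, hγ, hrlt⟩

lemma condY_prob {X Y : Type*} [Fintype X] [Fintype Y] {μ : X × Y → ℝ}
    (hμ : IsProbVec μ) {x : X} (hx : 0 < margX μ x) : IsProbVec (condY μ x) := by
  constructor
  · intro y; exact div_nonneg (hμ.1 _) hx.le
  · show ∑ y, μ (x, y) / margX μ x = 1
    rw [← Finset.sum_div]
    exact div_self hx.ne'

/-- For joint distributions `μ, ν` on `X × Y` with separable cost
`c_x + c_y`, and `πx` the optimal coupling of the `X`-marginals, the Wasserstein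
distance between the joints is bounded by
`W_{c_x}(μ_X, ν_X) + E_{(x,x') ∼ πx}[ W_{c_y}(μ(·|x), ν(·|x')) ]`. -/
theorem joint_wasserstein_marginal_conditional_bound
    {X Y : Type*} [Fintype X] [Fintype Y]
    (cx : X → X → ℝ) (cy : Y → Y → ℝ)
    (hcx : ∀ x x', 0 ≤ cx x x') (hcy : ∀ y y', 0 ≤ cy y y')
    (μ ν : X × Y → ℝ) (hμ : IsProbVec μ) (hν : IsProbVec ν)
    (hμpos : ∀ x, 0 < margX μ x) (hνpos : ∀ x, 0 < margX ν x)
    (πx : X → X → ℝ) (hπx : IsCoupling πx (margX μ) (margX ν))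
    (hπopt : ∑ x, ∑ x', cx x x' * πx x x' = W1 cx (margX μ) (margX ν)) :
    W1 (fun p q : X × Y => cx p.1 q.1 + cy p.2 q.2) μ ν ≤
      W1 cx (margX μ) (margX ν) +
        ∑ x, ∑ x', πx x x' * W1 cy (condY μ x) (condY ν x') := by
  have hπnn := hπx.1
  have hπsum : ∑ x, ∑ x', πx x x' = 1 := by
    simp_rw [hπx.2.1]
    rw [show ∑ x, margX μ x = ∑ p : X × Y, μ p by
      simp only [margX]; rw [Fintype.sum_prod_type]]
    exact hμ.2
  refine le_of_forall_pos_le_add fun ε hε => ?_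
  have hchoice : ∀ x x', ∃ γ : Y → Y → ℝ,
      IsCoupling γ (condY μ x) (condY ν x') ∧
      ∑ y, ∑ y', cy y y' * γ y y' < W1 cy (condY μ x) (condY ν x') + ε :=
    fun x x' => exists_coupling_lt hcy (condY_prob hμ (hμpos x))
      (condY_prob hν (hνpos x')) hε
  choose γ hγc hγlt using hchoice
  set Γ : X × Y → X × Y → ℝ := fun p q => πx p.1 q.1 * γ p.1 q.1 p.2 q.2 with hΓ
  have hγsum : ∀ x x', ∑ y, ∑ y', γ x x' y y' = 1 := by
    intro x x'
    simp_rw [(hγc x x').2.1]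
    exact (condY_prob hμ (hμpos x)).2
  have hΓc : IsCoupling Γ μ ν := by
    refine ⟨fun p q => mul_nonneg (hπnn _ _) ((hγc _ _).1 _ _), ?_, ?_⟩
    · rintro ⟨x, y⟩
      rw [Fintype.sum_prod_type]
      simp only [hΓ]
      have h1 : ∀ x', ∑ y', πx x x' * γ x x' y y' = πx x x' * condY μ x y := by
        intro x'; rw [← Finset.mul_sum, (hγc x x').2.1 y]
      simp_rw [h1, ← Finset.sum_mul, hπx.2.1 x, condY]
      rw [mul_div_assoc']
      exact mul_div_cancel_left₀ _ (hμpos x).ne'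
    · rintro ⟨x', y'⟩
      rw [Fintype.sum_prod_type]
      simp only [hΓ]
      have h1 : ∀ x, ∑ y, πx x x' * γ x x' y y' = πx x x' * condY ν x' y' := by
        intro x; rw [← Finset.mul_sum, (hγc x x').2.2 y']
      simp_rw [h1, ← Finset.sum_mul, hπx.2.2 x', condY]
      rw [mul_div_assoc']
      exact mul_div_cancel_left₀ _ (hνpos x').ne'
  have hbound := W1_le_cost (c := fun p q : X × Y => cx p.1 q.1 + cy p.2 q.2)
    (fun p q => add_nonneg (hcx _ _) (hcy _ _)) hΓc
  have key : ∀ x, ∑ y, ∑ x', ∑ y',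
      (cx x x' + cy y y') * (πx x x' * γ x x' y y') =
      ∑ x', (cx x x' * πx x x'
        + πx x x' * ∑ y, ∑ y', cy y y' * γ x x' y y') := by
    intro x
    rw [Finset.sum_comm]
    refine Finset.sum_congr rfl fun x' _ => ?_
    have e : ∀ y y', (cx x x' + cy y y') * (πx x x' * γ x x' y y') =
        cx x x' * πx x x' * γ x x' y y'
          + πx x x' * (cy y y' * γ x x' y y') := by intros; ring
    simp_rw [e, Finset.sum_add_distrib, ← Finset.mul_sum, hγsum x x', mul_one]
  have hcost : ∑ p : X × Y, ∑ q : X × Y, (cx p.1 q.1 + cy p.2 q.2) * Γ p q =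
      ∑ x, ∑ x', (cx x x' * πx x x'
        + πx x x' * ∑ y, ∑ y', cy y y' * γ x x' y y') := by
    rw [Fintype.sum_prod_type]
    simp_rw [Fintype.sum_prod_type]
    simp only [hΓ]
    exact Finset.sum_congr rfl fun x _ => key x
  rw [hcost] at hbound
  refine hbound.trans ?_
  simp_rw [Finset.sum_add_distrib]
  rw [hπopt]
  have h2 : ∑ x, ∑ x', πx x x' * ε = ε := by
    simp_rw [← Finset.sum_mul]
    rw [hπsum, one_mul]
  have h3 : ∑ x, ∑ x', πx x x' * (∑ y, ∑ y', cy y y' * γ x x' y y') ≤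
      ∑ x, ∑ x', πx x x' * (W1 cy (condY μ x) (condY ν x') + ε) := by
    refine Finset.sum_le_sum fun x _ => Finset.sum_le_sum fun x' _ => ?_
    exact mul_le_mul_of_nonneg_left (hγlt x x').le (hπnn x x')
  have h4 : ∑ x, ∑ x', πx x x' * (W1 cy (condY μ x) (condY ν x') + ε) =
      (∑ x, ∑ x', πx x x' * W1 cy (condY μ x) (condY ν x')) + ε := by
    simp_rw [mul_add, Finset.sum_add_distrib]
    rw [h2]
  linarith
end
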